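/- Let U ⊆ ℝ^N be an open set, F ∈ Matrix (Fin N) (Fin N) ℝ a constant matrix with F * F = 0, and g : U → Matrix (Fin N) (Fin N) ℝ a smooth metric (symmetric, invertible) pure toward F (Fᵀ * g(z) = g(z) * F). Let R_{σαβγ} = ∑_δ g_{σδ} R^δ_{αβγ} be the lowered curvature tensor of the Levi-Civita connection of g. If R is pure toward F with respect to its last two indices, i.e. ∑_λ F^λ_β R_{σαλγ} = ∑_λ F^λ_γ R_{σαβλ} on U for all indices, then R is pure with respect to all double indices: ∑_λ F^λ_σ R_{λαβγ} = ∑_λ F^λ_α R_{σλβγ} = ∑_λ F^λ_β R_{σαλγ} = ∑_λ F^λ_γ R_{σαβλ} on U for all indices. -/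

import Mathlib

open Matrix

/-- The partial derivative in the `σ`-th coordinate direction. -/
noncomputable def pd {N : ℕ} (σ : Fin N) (h : (Fin N → ℝ) → ℝ) (z : Fin N → ℝ) : ℝ :=
  fderiv ℝ h z (Pi.single σ 1)

section
variable {N : ℕ} {U : Set (Fin N → ℝ)} {z : Fin N → ℝ} {f h : (Fin N → ℝ) → ℝ}

lemma pd_congr (hU : IsOpen U) (hfh : ∀ w ∈ U, f w = h w) (hz : z ∈ U) (σ : Fin N) :
    pd σ f z = pd σ h z := by
  unfold pd
  rw [Filter.EventuallyEq.fderiv_eq (Filter.eventuallyEq_of_mem (hU.mem_nhds hz) hfh)]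

lemma pd_add (hf : DifferentiableAt ℝ f z) (hh : DifferentiableAt ℝ h z) (σ : Fin N) :
    pd σ (fun w => f w + h w) z = pd σ f z + pd σ h z := by
  unfold pd; rw [fderiv_fun_add hf hh]; rfl

lemma pd_sub (hf : DifferentiableAt ℝ f z) (hh : DifferentiableAt ℝ h z) (σ : Fin N) :
    pd σ (fun w => f w - h w) z = pd σ f z - pd σ h z := by
  unfold pd; rw [fderiv_fun_sub hf hh]; rfl

lemma pd_mul (hf : DifferentiableAt ℝ f z) (hh : DifferentiableAt ℝ h z) (σ : Fin N) :
    pd σ (fun w => f w * h w) z = pd σ f z * h z + f z * pd σ h z := by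
  unfold pd; rw [fderiv_fun_mul hf hh]
  simp [ContinuousLinearMap.add_apply, ContinuousLinearMap.smul_apply]
  ring

lemma pd_const_mul (hh : DifferentiableAt ℝ h z) (c : ℝ) (σ : Fin N) :
    pd σ (fun w => c * h w) z = c * pd σ h z := by
  unfold pd; rw [fderiv_const_mul hh]; simp

lemma pd_sum {ι : Type*} (s : Finset ι) (f : ι → (Fin N → ℝ) → ℝ)
    (hf : ∀ i ∈ s, DifferentiableAt ℝ (f i) z) (σ : Fin N) :
    pd σ (fun w => ∑ i ∈ s, f i w) z = ∑ i ∈ s, pd σ (f i) z := by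
  unfold pd; rw [fderiv_fun_sum hf]; simp

lemma contDiffOn_pd (hU : IsOpen U) (hf : ContDiffOn ℝ (⊤ : ℕ∞) f U) (σ : Fin N) :
    ContDiffOn ℝ (⊤ : ℕ∞) (fun z => pd σ f z) U := by
  have h1 : ContDiffOn ℝ (⊤ : ℕ∞) (fderiv ℝ f) U := hf.fderiv_of_isOpen hU (by simp)
  exact (ContinuousLinearMap.apply ℝ ℝ (Pi.single σ 1)).contDiff.comp_contDiffOn h1

lemma diffAt_of_cdOn {F : Type*} [NormedAddCommGroup F] [NormedSpace ℝ F]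
    {f : (Fin N → ℝ) → F} (hU : IsOpen U) (hf : ContDiffOn ℝ (⊤ : ℕ∞) f U) (hz : z ∈ U) :
    DifferentiableAt ℝ f z :=
  (hf.contDiffAt (hU.mem_nhds hz)).differentiableAt (by simp)

lemma pd_comm (hU : IsOpen U) (hf : ContDiffOn ℝ (⊤ : ℕ∞) f U) (hz : z ∈ U) (α β : Fin N) :
    pd α (fun w => pd β f w) z = pd β (fun w => pd α f w) z := by
  have hf' : ContDiffOn ℝ (⊤ : ℕ∞) (fderiv ℝ f) U := hf.fderiv_of_isOpen hU (by simp)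
  have hd : DifferentiableAt ℝ (fderiv ℝ f) z := diffAt_of_cdOn hU hf' hz
  have hev : ∀ᶠ y in nhds z, HasFDerivAt f (fderiv ℝ f y) y := by
    filter_upwards [hU.mem_nhds hz] with y hy
    exact (diffAt_of_cdOn hU hf hy).hasFDerivAt
  have hsymm := second_derivative_symmetric_of_eventually hev hd.hasFDerivAt
    (Pi.single α 1) (Pi.single β 1)
  have key : ∀ u v : Fin N → ℝ,
      fderiv ℝ (fun w => fderiv ℝ f w u) z v = (fderiv ℝ (fderiv ℝ f) z v) u := by
    intro u v
    have h1 : HasFDerivAt (fun w => fderiv ℝ f w u)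
        (((fderiv ℝ f z).comp 0) + (fderiv ℝ (fderiv ℝ f) z).flip u) z :=
      hd.hasFDerivAt.clm_apply (hasFDerivAt_const _ _)
    rw [h1.fderiv]
    simp
  unfold pd
  rw [key, key, hsymm]

end

section
variable {N : ℕ} {U : Set (Fin N → ℝ)}

lemma contDiffOn_finprod {ι : Type*} (s : Finset ι) (f : ι → (Fin N → ℝ) → ℝ)
    (hf : ∀ i ∈ s, ContDiffOn ℝ (⊤ : ℕ∞) (f i) U) :
    ContDiffOn ℝ (⊤ : ℕ∞) (fun z => ∏ i ∈ s, f i z) U := by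
  classical
  induction s using Finset.induction with
  | empty => simpa using contDiffOn_const
  | insert a s hni ih =>
    simp only [Finset.prod_insert hni]
    exact (hf a (Finset.mem_insert_self a s)).mul
      (ih fun i hi => hf i (Finset.mem_insert_of_mem hi))

lemma contDiffOn_det (M : (Fin N → ℝ) → Matrix (Fin N) (Fin N) ℝ)
    (h : ∀ i j, ContDiffOn ℝ (⊤ : ℕ∞) (fun z => M z i j) U) :
    ContDiffOn ℝ (⊤ : ℕ∞) (fun z => (M z).det) U := by
  simp only [Matrix.det_apply']
  apply ContDiffOn.sum
  intro σ _
  have := contDiffOn_finprod (U := U) Finset.univ (fun i z => M z (σ i) i)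
    (fun i _ => h (σ i) i)
  simpa using this.const_smul ((Equiv.Perm.sign σ : ℤ) : ℝ)

lemma contDiffOn_inv_entry (g : (Fin N → ℝ) → Matrix (Fin N) (Fin N) ℝ)
    (hsmooth : ∀ α β, ContDiffOn ℝ (⊤ : ℕ∞) (fun z => g z α β) U)
    (hinv : ∀ z ∈ U, IsUnit (g z).det) (σ μ : Fin N) :
    ContDiffOn ℝ (⊤ : ℕ∞) (fun z => (g z)⁻¹ σ μ) U := by
  have hdet : ContDiffOn ℝ (⊤ : ℕ∞) (fun z => (g z).det) U := contDiffOn_det g hsmooth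
  have hadj : ContDiffOn ℝ (⊤ : ℕ∞) (fun z => (g z).adjugate σ μ) U := by
    simp only [Matrix.adjugate_apply]
    apply contDiffOn_det
    intro i j
    rcases eq_or_ne i μ with rfl | hne
    · simpa [Matrix.updateRow_apply] using (contDiffOn_const :
        ContDiffOn ℝ (⊤ : ℕ∞) (fun _ : Fin N → ℝ => (Pi.single σ (1:ℝ) : Fin N → ℝ) j) U)
    · simpa [Matrix.updateRow_apply, hne] using hsmooth i j
  have key : ∀ z, (g z)⁻¹ σ μ = ((g z).det)⁻¹ * (g z).adjugate σ μ := by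
    intro z
    rw [Matrix.inv_def, Matrix.smul_apply, smul_eq_mul, Ring.inverse_eq_inv']
  simp only [key]
  exact (hdet.inv (fun z hz => (hinv z hz).ne_zero)).mul hadj

end

/-- The Christoffel symbols of the Levi-Civita connection of a metric `g`:
`Γ^σ_{αβ} = ½ ∑_λ g^{σλ} (∂_α g_{βλ} + ∂_β g_{λα} − ∂_λ g_{αβ})`. -/
noncomputable def christoffel {N : ℕ} (g : (Fin N → ℝ) → Matrix (Fin N) (Fin N) ℝ)
    (z : Fin N → ℝ) (σ α β : Fin N) : ℝ :=
  (1 / 2) * ∑ μ, (g z)⁻¹ σ μ *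
    (pd α (fun w => g w β μ) z + pd β (fun w => g w μ α) z - pd μ (fun w => g w α β) z)

/-- The curvature tensor of the Levi-Civita connection of a metric `g`:
`R^δ_{αβγ} = ∂_α Γ^δ_{βγ} − ∂_β Γ^δ_{αγ} + ∑_λ (Γ^δ_{αλ} Γ^λ_{βγ} − Γ^δ_{βλ} Γ^λ_{αγ})`. -/
noncomputable def curvature {N : ℕ} (g : (Fin N → ℝ) → Matrix (Fin N) (Fin N) ℝ)
    (z : Fin N → ℝ) (δ α β γ : Fin N) : ℝ :=
  pd α (fun w => christoffel g w δ β γ) z - pd β (fun w => christoffel g w δ α γ) z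
    + ∑ μ, (christoffel g z δ α μ * christoffel g z μ β γ
        - christoffel g z δ β μ * christoffel g z μ α γ)

/-- The lowered curvature tensor `R_{σαβγ} = ∑_δ g_{σδ} R^δ_{αβγ}`. -/
noncomputable def loweredCurvature {N : ℕ} (g : (Fin N → ℝ) → Matrix (Fin N) (Fin N) ℝ)
    (z : Fin N → ℝ) (σ α β γ : Fin N) : ℝ :=
  ∑ δ, g z σ δ * curvature g z δ α β γ


noncomputable def lG {N : ℕ} (g : (Fin N → ℝ) → Matrix (Fin N) (Fin N) ℝ)
    (z : Fin N → ℝ) (σ α β : Fin N) : ℝ :=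
  (1 / 2) * (pd α (fun w => g w β σ) z + pd β (fun w => g w σ α) z
    - pd σ (fun w => g w α β) z)

section main
variable {N : ℕ} {U : Set (Fin N → ℝ)} {z : Fin N → ℝ}
  {g : (Fin N → ℝ) → Matrix (Fin N) (Fin N) ℝ}

lemma christoffel_eq (z : Fin N → ℝ) (σ α β : Fin N) :
    christoffel g z σ α β = ∑ μ, (g z)⁻¹ σ μ * lG g z μ α β := by
  unfold christoffel lG
  rw [Finset.mul_sum]
  exact Finset.sum_congr rfl fun μ _ => by ring

lemma contDiffOn_lG (hU : IsOpen U)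
    (hsmooth : ∀ α β, ContDiffOn ℝ (⊤ : ℕ∞) (fun z => g z α β) U) (σ α β : Fin N) :
    ContDiffOn ℝ (⊤ : ℕ∞) (fun z => lG g z σ α β) U := by
  unfold lG
  exact ((((contDiffOn_pd hU (hsmooth β σ) α).add
    (contDiffOn_pd hU (hsmooth σ α) β)).sub
    (contDiffOn_pd hU (hsmooth α β) σ)).const_smul ((1:ℝ)/2)).congr
    (fun z _ => by simp [smul_eq_mul])

lemma contDiffOn_christoffel (hU : IsOpen U)
    (hsmooth : ∀ α β, ContDiffOn ℝ (⊤ : ℕ∞) (fun z => g z α β) U)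
    (hinv : ∀ z ∈ U, IsUnit (g z).det) (σ α β : Fin N) :
    ContDiffOn ℝ (⊤ : ℕ∞) (fun z => christoffel g z σ α β) U := by
  simp only [christoffel_eq]
  exact ContDiffOn.sum fun μ _ =>
    (contDiffOn_inv_entry g hsmooth hinv σ μ).mul (contDiffOn_lG hU hsmooth μ α β)

end main

section pointwise
variable {N : ℕ} {U : Set (Fin N → ℝ)} {z : Fin N → ℝ}
  {g : (Fin N → ℝ) → Matrix (Fin N) (Fin N) ℝ}

lemma pd_g_symm (hU : IsOpen U) (hsymm : ∀ z ∈ U, (g z).IsSymm) (hz : z ∈ U)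
    (μ α β : Fin N) :
    pd μ (fun w => g w α β) z = pd μ (fun w => g w β α) z :=
  pd_congr hU (fun w hw => (hsymm w hw).apply β α) hz μ

lemma ginv_symm (hsymm : ∀ z ∈ U, (g z).IsSymm) (hz : z ∈ U) (σ μ : Fin N) :
    (g z)⁻¹ σ μ = (g z)⁻¹ μ σ := by
  have h : ((g z)⁻¹)ᵀ = (g z)⁻¹ := by
    rw [Matrix.transpose_nonsing_inv, (hsymm z hz).eq]
  conv_lhs => rw [← h]
  rfl

lemma sum_g_inv (hinv : ∀ z ∈ U, IsUnit (g z).det) (hz : z ∈ U) (σ μ : Fin N) :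
    ∑ δ, g z σ δ * (g z)⁻¹ δ μ = if σ = μ then (1:ℝ) else 0 := by
  have h := Matrix.mul_nonsing_inv (g z) (hinv z hz)
  have := congrArg (fun M => M σ μ) h
  simpa [Matrix.mul_apply, Matrix.one_apply] using this

lemma sum_g_christoffel (hinv : ∀ z ∈ U, IsUnit (g z).det) (hz : z ∈ U)
    (σ α β : Fin N) :
    ∑ δ, g z σ δ * christoffel g z δ α β = lG g z σ α β := by
  simp only [christoffel_eq, Finset.mul_sum]
  rw [Finset.sum_comm]
  have : ∀ μ, ∑ δ, g z σ δ * ((g z)⁻¹ δ μ * lG g z μ α β)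
      = (if σ = μ then (1:ℝ) else 0) * lG g z μ α β := by
    intro μ
    rw [← sum_g_inv hinv hz σ μ, Finset.sum_mul]
    exact Finset.sum_congr rfl fun δ _ => by ring
  simp only [this, ite_mul, one_mul, zero_mul]
  simp only [Finset.sum_ite_eq, Finset.mem_univ, if_true]

lemma pd_g_eq_lG (hU : IsOpen U) (hsymm : ∀ z ∈ U, (g z).IsSymm) (hz : z ∈ U)
    (α σ ν : Fin N) :
    pd α (fun w => g w σ ν) z = lG g z σ α ν + lG g z ν α σ := by
  unfold lG
  rw [pd_g_symm hU hsymm hz ν σ α, pd_g_symm hU hsymm hz σ α ν,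
    pd_g_symm hU hsymm hz α ν σ]
  ring

lemma key_der (hU : IsOpen U) (hsmooth : ∀ α β, ContDiffOn ℝ (⊤ : ℕ∞) (fun z => g z α β) U)
    (hsymm : ∀ z ∈ U, (g z).IsSymm) (hinv : ∀ z ∈ U, IsUnit (g z).det) (hz : z ∈ U)
    (σ τ η ζ : Fin N) :
    ∑ δ, g z σ δ * pd τ (fun w => christoffel g w δ η ζ) z
      = pd τ (fun w => lG g w σ η ζ) z
        - ∑ δ, (lG g z σ τ δ + lG g z δ τ σ) * christoffel g z δ η ζ := by
  have dG : ∀ a b, DifferentiableAt ℝ (fun w => g w a b) z :=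
    fun a b => diffAt_of_cdOn hU (hsmooth a b) hz
  have dC : ∀ d a b, DifferentiableAt ℝ (fun w => christoffel g w d a b) z :=
    fun d a b => diffAt_of_cdOn hU (contDiffOn_christoffel hU hsmooth hinv d a b) hz
  have h1 : ∀ δ : Fin N, g z σ δ * pd τ (fun w => christoffel g w δ η ζ) z
      = pd τ (fun w => g w σ δ * christoffel g w δ η ζ) z
        - pd τ (fun w => g w σ δ) z * christoffel g z δ η ζ := by
    intro δ; rw [pd_mul (dG σ δ) (dC δ η ζ)]; ring
  simp only [h1, Finset.sum_sub_distrib]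
  rw [← pd_sum Finset.univ (fun δ w => g w σ δ * christoffel g w δ η ζ) (fun δ _ => (dG σ δ).mul (dC δ η ζ)) τ]
  congr 1
  · exact pd_congr hU (fun w hw => sum_g_christoffel hinv hw σ η ζ) hz τ
  · exact Finset.sum_congr rfl fun δ _ => by
      rw [pd_g_eq_lG hU hsymm hz τ σ δ]

lemma loweredCurvature_eq (hU : IsOpen U)
    (hsmooth : ∀ α β, ContDiffOn ℝ (⊤ : ℕ∞) (fun z => g z α β) U)
    (hsymm : ∀ z ∈ U, (g z).IsSymm) (hinv : ∀ z ∈ U, IsUnit (g z).det) (hz : z ∈ U)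
    (σ α β γ : Fin N) :
    loweredCurvature g z σ α β γ
      = pd α (fun w => lG g w σ β γ) z - pd β (fun w => lG g w σ α γ) z
        - ∑ μ, (lG g z μ α σ * christoffel g z μ β γ
            - lG g z μ β σ * christoffel g z μ α γ) := by
  have expand : loweredCurvature g z σ α β γ
      = ((∑ δ, g z σ δ * pd α (fun w => christoffel g w δ β γ) z)
        - ∑ δ, g z σ δ * pd β (fun w => christoffel g w δ α γ) z)
        + ((∑ δ, ∑ μ, g z σ δ * christoffel g z δ α μ * christoffel g z μ β γ)
        - ∑ δ, ∑ μ, g z σ δ * christoffel g z δ β μ * christoffel g z μ α γ) := by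
    unfold loweredCurvature curvature
    simp only [mul_add, mul_sub, Finset.mul_sum, Finset.sum_add_distrib,
      Finset.sum_sub_distrib, mul_assoc]
  have quad1 : ∑ δ, ∑ μ, g z σ δ * christoffel g z δ α μ * christoffel g z μ β γ
      = ∑ μ, lG g z σ α μ * christoffel g z μ β γ := by
    rw [Finset.sum_comm]
    refine Finset.sum_congr rfl fun μ _ => ?_
    rw [← sum_g_christoffel hinv hz σ α μ, Finset.sum_mul]
  have quad2 : ∑ δ, ∑ μ, g z σ δ * christoffel g z δ β μ * christoffel g z μ α γ
      = ∑ μ, lG g z σ β μ * christoffel g z μ α γ := by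
    rw [Finset.sum_comm]
    refine Finset.sum_congr rfl fun μ _ => ?_
    rw [← sum_g_christoffel hinv hz σ β μ, Finset.sum_mul]
  rw [expand, quad1, quad2, key_der hU hsmooth hsymm hinv hz σ α β γ,
    key_der hU hsmooth hsymm hinv hz σ β α γ]
  simp only [add_mul, Finset.sum_add_distrib, Finset.sum_sub_distrib]
  ring

lemma sum_lG_christoffel_symm (hsymm : ∀ z ∈ U, (g z).IsSymm)
    (hinv : ∀ z ∈ U, IsUnit (g z).det) (hz : z ∈ U) (a b c d : Fin N) :
    ∑ μ, lG g z μ a b * christoffel g z μ c d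
      = ∑ μ, lG g z μ c d * christoffel g z μ a b := by
  simp only [christoffel_eq, Finset.mul_sum]
  rw [Finset.sum_comm]
  refine Finset.sum_congr rfl fun μ _ => Finset.sum_congr rfl fun ν _ => ?_
  rw [ginv_symm hsymm hz ν μ]
  ring

lemma lowered_antisym14 (hU : IsOpen U)
    (hsmooth : ∀ α β, ContDiffOn ℝ (⊤ : ℕ∞) (fun z => g z α β) U)
    (hsymm : ∀ z ∈ U, (g z).IsSymm) (hinv : ∀ z ∈ U, IsUnit (g z).det) (hz : z ∈ U)
    (σ α β γ : Fin N) :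
    loweredCurvature g z σ α β γ = - loweredCurvature g z γ α β σ := by
  have dlG : ∀ a b c, DifferentiableAt ℝ (fun w => lG g w a b c) z :=
    fun a b c => diffAt_of_cdOn hU (contDiffOn_lG hU hsmooth a b c) hz
  have key2 : ∀ τ η : Fin N,
      pd τ (fun w => lG g w σ η γ) z + pd τ (fun w => lG g w γ η σ) z
        = pd τ (fun w => pd η (fun v => g v σ γ) w) z := by
    intro τ η
    rw [← pd_add (dlG σ η γ) (dlG γ η σ) τ]
    exact pd_congr hU (fun w hw => (pd_g_eq_lG hU hsymm hw η σ γ).symm) hz τ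
  have h1 := key2 α β
  have h2 := key2 β α
  have h3 := pd_comm hU (hsmooth σ γ) hz α β
  have h4 := sum_lG_christoffel_symm hsymm hinv hz α σ β γ
  have h5 := sum_lG_christoffel_symm hsymm hinv hz α γ β σ
  rw [loweredCurvature_eq hU hsmooth hsymm hinv hz σ α β γ,
    loweredCurvature_eq hU hsmooth hsymm hinv hz γ α β σ]
  simp only [Finset.sum_sub_distrib]
  linear_combination h1 - h2 + h3 - h4 - h5

lemma lowered_antisym23 (σ α β γ : Fin N) :
    loweredCurvature g z σ α β γ = - loweredCurvature g z σ β α γ := by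
  have hc : ∀ δ, curvature g z δ α β γ = - curvature g z δ β α γ := by
    intro δ
    unfold curvature
    simp only [Finset.sum_sub_distrib]
    ring
  unfold loweredCurvature
  simp only [hc, mul_neg, Finset.sum_neg_distrib]

end pointwise

/-- For a B-type structure (a smooth metric `g` pure toward a
constant nilpotent `F`), if the lowered curvature tensor `R` of the Levi-Civita
connection of `g` is pure toward `F` in its last two indices, then it is pure with
respect to all double indices. -/
theorem stmt_18 {N : ℕ} (U : Set (Fin N → ℝ)) (hUopen : IsOpen U)
    (F : Matrix (Fin N) (Fin N) ℝ) (hF : F * F = 0)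
    (g : (Fin N → ℝ) → Matrix (Fin N) (Fin N) ℝ)
    (hsmooth : ∀ α β, ContDiffOn ℝ (⊤ : ℕ∞) (fun z => g z α β) U)
    (hsymm : ∀ z ∈ U, (g z).IsSymm)
    (hinv : ∀ z ∈ U, IsUnit (g z).det)
    (hpure : ∀ z ∈ U, Fᵀ * g z = g z * F)
    (hRpure : ∀ z ∈ U, ∀ σ α β γ,
      ∑ μ, F μ β * loweredCurvature g z σ α μ γ
        = ∑ μ, F μ γ * loweredCurvature g z σ α β μ) :
    ∀ z ∈ U, ∀ σ α β γ,
      ∑ μ, F μ σ * loweredCurvature g z μ α β γ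
          = ∑ μ, F μ α * loweredCurvature g z σ μ β γ ∧
      ∑ μ, F μ α * loweredCurvature g z σ μ β γ
          = ∑ μ, F μ β * loweredCurvature g z σ α μ γ ∧
      ∑ μ, F μ β * loweredCurvature g z σ α μ γ
          = ∑ μ, F μ γ * loweredCurvature g z σ α β μ := by
  intro z hz σ α β γ
  have S1 : ∀ σ α β γ : Fin N, loweredCurvature g z σ α β γ
      = - loweredCurvature g z σ β α γ := fun σ α β γ => lowered_antisym23 σ α β γ
  have S2 : ∀ σ α β γ : Fin N, loweredCurvature g z σ α β γ
      = - loweredCurvature g z γ α β σ := fun σ α β γ =>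
    lowered_antisym14 hUopen hsmooth hsymm hinv hz σ α β γ
  have H := hRpure z hz
  have E13 : ∑ μ, F μ σ * loweredCurvature g z μ α β γ
      = ∑ μ, F μ β * loweredCurvature g z σ α μ γ := by
    calc ∑ μ, F μ σ * loweredCurvature g z μ α β γ
        = -(∑ μ, F μ σ * loweredCurvature g z γ α β μ) := by
          simp only [← Finset.sum_neg_distrib, ← mul_neg]
          exact Finset.sum_congr rfl fun μ _ => by rw [← S2 μ α β γ]
      _ = -(∑ μ, F μ β * loweredCurvature g z γ α μ σ) := by rw [H γ α β σ]
      _ = ∑ μ, F μ β * loweredCurvature g z σ α μ γ := by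
          simp only [← Finset.sum_neg_distrib, ← mul_neg]
          exact Finset.sum_congr rfl fun μ _ => by rw [S2 γ α μ σ]; ring
  have E23 : ∑ μ, F μ α * loweredCurvature g z σ μ β γ
      = ∑ μ, F μ β * loweredCurvature g z σ α μ γ := by
    calc ∑ μ, F μ α * loweredCurvature g z σ μ β γ
        = -(∑ μ, F μ α * loweredCurvature g z σ β μ γ) := by
          simp only [← Finset.sum_neg_distrib, ← mul_neg]
          exact Finset.sum_congr rfl fun μ _ => by rw [← S1 σ μ β γ]
      _ = -(∑ μ, F μ γ * loweredCurvature g z σ β α μ) := by rw [H σ β α γ]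
      _ = ∑ μ, F μ γ * loweredCurvature g z σ α β μ := by
          simp only [← Finset.sum_neg_distrib, ← mul_neg]
          exact Finset.sum_congr rfl fun μ _ => by rw [← S1 σ α β μ]
      _ = ∑ μ, F μ β * loweredCurvature g z σ α μ γ := (H σ α β γ).symm
  exact ⟨E13.trans E23.symm, E23, H σ α β γ⟩
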